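/- arXiv:1305.7495 — 3 statements merged into one kernel-verified Lean document; each statement's English description precedes it below -/
import Mathlib

section
/- Let X be a compact metric space admitting an essential continuous map f : X → [0,1], and let A be a unital C*-algebra such that the invertible elements of C(X,A) are dense in C(X,A). Then every unitary of A lies in the connected component of the identity in the group of invertible elements of A. -/
noncomputable section

set_option maxHeartbeats 1000000

/-- A continuous map `f : X → [0,1]` is *essential* if every continuous `g : X → [0,1]`
agreeing with `f` on `f⁻¹({0,1})` is surjective. -/
def EssentialMap {X : Type*} [TopologicalSpace X] (f : C(X, unitInterval)) : Prop :=
  ∀ g : C(X, unitInterval), (∀ x : X, (f x = 0 ∨ f x = 1) → g x = f x) →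
    Function.Surjective g

section Aux

variable {A : Type*} [NormedRing A] [CompleteSpace A] [NormedSpace ℝ A]

lemma aux_near_one (z : Aˣ) (hz : ‖(z : A) - 1‖ < 1) : z ∈ connectedComponent (1 : Aˣ) := by
  set t : A := 1 - (z : A) with ht
  have hzt : ‖t‖ < 1 := by rwa [ht, norm_sub_rev]
  have hb : ∀ s : unitInterval, ‖(s : ℝ) • t‖ < 1 := by
    intro s
    rw [norm_smul]
    calc ‖(s:ℝ)‖ * ‖t‖ ≤ 1 * ‖t‖ := by
          apply mul_le_mul_of_nonneg_right _ (norm_nonneg t)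
          rw [Real.norm_eq_abs, abs_of_nonneg s.2.1]; exact s.2.2
      _ < 1 := by rwa [one_mul]
  let c : unitInterval → Aˣ := fun s => Units.oneSub ((s : ℝ) • t) (hb s)
  have hc : Continuous c := by
    rw [Units.continuous_iff]
    have hval : Continuous fun s : unitInterval => (1 : A) - (s : ℝ) • t :=
      continuous_const.sub (continuous_subtype_val.smul continuous_const)
    constructor
    · exact hval
    · have : (fun s : unitInterval => (((c s)⁻¹ : Aˣ) : A)) =
          (Ring.inverse : A → A) ∘ fun s : unitInterval => (1 : A) - (s : ℝ) • t := by
        funext s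
        exact (Ring.inverse_unit (c s)).symm
      rw [this]
      refine continuous_iff_continuousAt.2 fun s => ?_
      exact ContinuousAt.comp (x := s) (NormedRing.inverse_continuousAt (c s)) hval.continuousAt
  have hconn : IsPreconnected (Set.range c) := by
    have := isPreconnected_univ.image c hc.continuousOn
    rwa [Set.image_univ] at this
  have h1 : (1 : Aˣ) ∈ Set.range c := ⟨0, by ext; simp [c, Units.val_oneSub]⟩
  have hsub := hconn.subset_connectedComponent h1
  have hzr : z ∈ Set.range c := ⟨1, by ext; simp [c, Units.val_oneSub, ht]⟩
  exact hsub hzr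

lemma aux_near (w z : Aˣ) (h : ‖(z : A) - w‖ * ‖((w⁻¹ : Aˣ) : A)‖ < 1) :
    z ∈ connectedComponent w := by
  have hm : ‖((w⁻¹ * z : Aˣ) : A) - 1‖ < 1 := by
    have : ((w⁻¹ * z : Aˣ) : A) - 1 = ((w⁻¹ : Aˣ) : A) * ((z : A) - w) := by
      simp [mul_sub, Units.inv_mul]
    rw [this]
    calc ‖((w⁻¹ : Aˣ) : A) * ((z : A) - w)‖ ≤ ‖((w⁻¹ : Aˣ) : A)‖ * ‖(z : A) - w‖ := norm_mul_le _ _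
      _ = ‖(z : A) - w‖ * ‖((w⁻¹ : Aˣ) : A)‖ := mul_comm _ _
      _ < 1 := h
  have h1 := aux_near_one (w⁻¹ * z) hm
  have hcont : Continuous fun x : Aˣ => w * x := continuous_const.mul continuous_id
  have himg : IsPreconnected ((fun x : Aˣ => w * x) '' connectedComponent 1) :=
    isPreconnected_connectedComponent.image _ hcont.continuousOn
  have hw : w ∈ (fun x : Aˣ => w * x) '' connectedComponent 1 :=
    ⟨1, mem_connectedComponent, mul_one w⟩
  have := himg.subset_connectedComponent hw
  exact this ⟨w⁻¹ * z, h1, by simp⟩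

end Aux

theorem stmt10 (X : Type*) [MetricSpace X] [CompactSpace X]
    (f : C(X, unitInterval)) (hf : EssentialMap f)
    (A : Type*) [CStarAlgebra A]
    (hdense : Dense {g : C(X, A) | IsUnit g}) :
    ∀ u : A, u ∈ unitary A → ∃ v : Aˣ, (v : A) = u ∧ v ∈ connectedComponent (1 : Aˣ) := by
  classical
  intro u hu
  by_cases hA : Subsingleton A
  · exact ⟨Unitary.toUnits ⟨u, hu⟩, rfl, by
      have : Unitary.toUnits (⟨u, hu⟩ : unitary A) = 1 := Units.ext (Subsingleton.elim _ _)
      rw [this]; exact mem_connectedComponent⟩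
  have hnt : Nontrivial A := not_subsingleton_iff_nontrivial.mp hA
  set v : Aˣ := Unitary.toUnits ⟨u, hu⟩ with hv
  refine ⟨v, rfl, ?_⟩
  by_contra hvc
  -- norms
  have hun : ‖u‖ = 1 := CStarRing.norm_coe_unitary (⟨u, hu⟩ : unitary A)
  have hvinv : ((v⁻¹ : Aˣ) : A) = star u := rfl
  have hvinvn : ‖((v⁻¹ : Aˣ) : A)‖ = 1 := by rw [hvinv, norm_star, hun]
  -- the straight-line element
  have hg₀cont : Continuous fun x : X => ((f x : ℝ)) • u + ((1 : ℝ) - (f x : ℝ)) • (1 : A) := by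
    have hc : Continuous fun x : X => ((f x : ℝ)) :=
      continuous_subtype_val.comp (map_continuous f)
    exact (hc.smul continuous_const).add ((continuous_const.sub hc).smul continuous_const)
  set g₀ : C(X, A) := ⟨_, hg₀cont⟩ with hg₀
  obtain ⟨h, hhu, hdist⟩ : ∃ h ∈ {g : C(X, A) | IsUnit g}, dist g₀ h < 1 / 2 := by
    have := Metric.dense_iff.mp hdense g₀ (1 / 2) (by norm_num)
    obtain ⟨h, hball, hmem⟩ := this
    exact ⟨h, hmem, by rwa [Metric.mem_ball, dist_comm] at hball⟩
  set H : C(X, A)ˣ := hhu.unit with hH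
  have Hval : (↑H : C(X, A)) = h := hhu.unit_spec
  have hmul : ∀ x, h x * (↑H⁻¹ : C(X, A)) x = 1 := by
    intro x
    have := congrArg (fun k : C(X, A) => k x) H.mul_inv
    simpa [Hval] using this
  have hmul' : ∀ x, (↑H⁻¹ : C(X, A)) x * h x = 1 := by
    intro x
    have := congrArg (fun k : C(X, A) => k x) H.inv_mul
    simpa [Hval] using this
  set hx : X → Aˣ := fun x => ⟨h x, (↑H⁻¹ : C(X, A)) x, hmul x, hmul' x⟩ with hhx
  have hxcont : Continuous hx := by
    rw [Units.continuous_iff]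
    exact ⟨map_continuous h, map_continuous (↑H⁻¹ : C(X, A))⟩
  have hptwise : ∀ x, ‖h x - g₀ x‖ < 1 / 2 := by
    intro x
    have h1 : dist (g₀ x) (h x) ≤ dist g₀ h := ContinuousMap.dist_apply_le_dist x
    have := lt_of_le_of_lt h1 hdist
    rwa [dist_comm, dist_eq_norm] at this
  -- x with f x = 0 : hx x in component of 1
  have hzero : ∀ x, f x = 0 → hx x ∈ connectedComponent (1 : Aˣ) := by
    intro x hx0
    have hg : g₀ x = 1 := by
      show ((f x : ℝ)) • u + ((1 : ℝ) - (f x : ℝ)) • (1 : A) = 1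
      rw [hx0]
      simp
    have hlt : ‖((hx x : Aˣ) : A) - ((1 : Aˣ) : A)‖ < 1 / 2 := by
      show ‖h x - (1 : A)‖ < 1 / 2
      rw [← hg]
      exact hptwise x
    refine aux_near 1 (hx x) ?_
    simp only [inv_one, Units.val_one, norm_one, mul_one]
    exact hlt.trans (by norm_num)
  have hone : ∀ x, f x = 1 → hx x ∈ connectedComponent v := by
    intro x hx1
    have hg : g₀ x = u := by
      show ((f x : ℝ)) • u + ((1 : ℝ) - (f x : ℝ)) • (1 : A) = u
      rw [hx1]
      simp
    have hlt : ‖((hx x : Aˣ) : A) - (v : A)‖ < 1 / 2 := by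
      show ‖h x - u‖ < 1 / 2
      have : (v : A) = u := rfl
      rw [← hg]
      exact hptwise x
    refine aux_near v (hx x) ?_
    rw [hvinvn, mul_one]
    exact hlt.trans (by norm_num)
  set U : Set X := {x | hx x ∈ connectedComponent (1 : Aˣ)} with hU
  have hUclosed : IsClosed U := isClosed_connectedComponent.preimage hxcont
  have hUopen : IsOpen U := by
    rw [isOpen_iff_mem_nhds]
    intro x₀ hx₀
    set c : ℝ := ‖(((hx x₀)⁻¹ : Aˣ) : A)‖ with hc
    have hcnn : 0 ≤ c := norm_nonneg _
    have hεpos : 0 < 1 / (c + 1) := by positivity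
    have hball : h ⁻¹' Metric.ball (h x₀) (1 / (c + 1)) ∈ nhds x₀ :=
      (map_continuous h).continuousAt.preimage_mem_nhds
        (Metric.ball_mem_nhds _ hεpos)
    refine Filter.mem_of_superset hball ?_
    intro x hxball
    have hd : ‖h x - h x₀‖ < 1 / (c + 1) := by
      have := hxball
      rwa [Set.mem_preimage, Metric.mem_ball, dist_eq_norm] at this
    have hnear : hx x ∈ connectedComponent (hx x₀) := by
      refine aux_near (hx x₀) (hx x) ?_
      show ‖h x - h x₀‖ * c < 1
      have h2 : ‖h x - h x₀‖ * c ≤ ‖h x - h x₀‖ * (c + 1) := by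
        nlinarith [norm_nonneg (h x - h x₀)]
      have h3 : ‖h x - h x₀‖ * (c + 1) < (1 / (c + 1)) * (c + 1) :=
        mul_lt_mul_of_pos_right hd (by linarith)
      have h4 : (1 / (c + 1)) * (c + 1) = 1 := by
        field_simp
      linarith
    show hx x ∈ connectedComponent (1 : Aˣ)
    rw [← connectedComponent_eq hx₀] at hnear
    exact hnear
  -- test map g
  have hgc : Continuous fun x : X => if x ∈ U then (0 : unitInterval) else 1 := by
    refine IsLocallyConstant.continuous ?_
    intro s
    by_cases h0 : (0 : unitInterval) ∈ s <;> by_cases h1 : (1 : unitInterval) ∈ s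
    · have : (fun x : X => if x ∈ U then (0 : unitInterval) else 1) ⁻¹' s = Set.univ := by
        ext x; by_cases hxu : x ∈ U <;> simp [hxu, h0, h1]
      rw [this]; exact isOpen_univ
    · have : (fun x : X => if x ∈ U then (0 : unitInterval) else 1) ⁻¹' s = U := by
        ext x; by_cases hxu : x ∈ U <;> simp [hxu, h0, h1]
      rw [this]; exact hUopen
    · have : (fun x : X => if x ∈ U then (0 : unitInterval) else 1) ⁻¹' s = Uᶜ := by
        ext x; by_cases hxu : x ∈ U <;> simp [hxu, h0, h1]
      rw [this]; exact hUclosed.isOpen_compl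
    · have : (fun x : X => if x ∈ U then (0 : unitInterval) else 1) ⁻¹' s = ∅ := by
        ext x; by_cases hxu : x ∈ U <;> simp [hxu, h0, h1]
      rw [this]; exact isOpen_empty
  set g : C(X, unitInterval) := ⟨_, hgc⟩ with hg
  have hagree : ∀ x : X, (f x = 0 ∨ f x = 1) → g x = f x := by
    intro x hx01
    rcases hx01 with hx0 | hx1
    · have : x ∈ U := hzero x hx0
      show (if x ∈ U then (0 : unitInterval) else 1) = f x
      rw [if_pos this, hx0]
    · have hnU : x ∉ U := by
        intro hxU
        have h1 : connectedComponent (hx x) = connectedComponent (1 : Aˣ) :=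
          (connectedComponent_eq hxU).symm
        have h2 : connectedComponent (hx x) = connectedComponent v :=
          (connectedComponent_eq (hone x hx1)).symm
        apply hvc
        rw [h1.symm.trans h2]
        exact mem_connectedComponent
      show (if x ∈ U then (0 : unitInterval) else 1) = f x
      rw [if_neg hnU, hx1]
  obtain ⟨y, hy⟩ := hf g hagree ⟨1 / 2, by rw [Set.mem_Icc]; norm_num⟩
  have hval : (if y ∈ U then (0 : unitInterval) else 1) =
      (⟨1 / 2, by rw [Set.mem_Icc]; norm_num⟩ : unitInterval) := hy
  by_cases hyU : y ∈ U
  · rw [if_pos hyU] at hval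
    have := congrArg Subtype.val hval
    norm_num at this
  · rw [if_neg hyU] at hval
    have := congrArg Subtype.val hval
    norm_num at this
end
end

section
/- Let M and N be partially ordered abelian semigroups and let ι : M → N be an additive order-embedding (ι(a+b) = ι(a)+ι(b), and a ≤ b in M if and only if ι(a) ≤ ι(b) in N). Assume: (a) every increasing sequence in N has a supremum; (b) every element of N is the supremum of a sequence (ι(xₙ)) with xₙ ∈ M and ι(xₙ) ≪ ι(xₙ₊₁) in N for all n; (c) ι is hereditary, i.e. whenever y ∈ N, x ∈ M and y ≤ ι(x), then y ∈ ι(M). Then M has the Riesz interpolation property if and only if N has the Riesz interpolation property. -/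
noncomputable section

set_option maxHeartbeats 1000000

/-- `a` is compactly contained in `b`: for every increasing sequence having a supremum
which dominates `b`, some term already dominates `a`. -/
def CompactlyContained {M : Type*} [Preorder M] (a b : M) : Prop :=
  ∀ c : ℕ → M, Monotone c → ∀ s : M, IsLUB (Set.range c) s → b ≤ s → ∃ n, a ≤ c n

/-- The Riesz interpolation property. -/
def RieszInterpolation (M : Type*) [Preorder M] : Prop :=
  ∀ a₁ a₂ b₁ b₂ : M, a₁ ≤ b₁ → a₁ ≤ b₂ → a₂ ≤ b₁ → a₂ ≤ b₂ →
    ∃ c : M, a₁ ≤ c ∧ a₂ ≤ c ∧ c ≤ b₁ ∧ c ≤ b₂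

/-! Pulling interpolation back from `N` to `M` is immediate: interpolate in `N` and use heredity
to land in the image of `ι`. For the converse, write `a₁, a₂, b₁, b₂ ∈ N` as suprema of
`≪`-chains `ι xₙ`, `ι yₙ`, `ι uₖ`, `ι vₗ`. Compact containment puts every `xₙ` and `yₙ` below
some `uₖ` and below some `vₗ`. By interpolation in `M`, the elements lying below some `uₖ` and
below some `vₗ` form a directed set, so one increasing sequence `cₙ` in it dominates all `xₙ`
and `yₙ`, and the supremum of the `ι cₙ` interpolates between the `aᵢ` and the `bⱼ`. -/

open Set

section Order

variable {α : Type*} [Preorder α]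

theorem CompactlyContained.le {a b : α} (h : CompactlyContained a b) : a ≤ b := by
  obtain ⟨n, hn⟩ := h (fun _ => b) monotone_const b (by simp) le_rfl
  exact hn

theorem monotone_nat_of_compactlyContained_succ {f : ℕ → α}
    (hf : ∀ n, CompactlyContained (f n) (f (n + 1))) : Monotone f :=
  monotone_nat_of_le_succ fun n => (hf n).le

theorem IsLUB.le_of_forall_exists_le {ι κ : Type*} {f : ι → α} {g : κ → α} {a b : α}
    (ha : IsLUB (range f) a) (hb : b ∈ upperBounds (range g)) (h : ∀ i, ∃ k, f i ≤ g k) :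
    a ≤ b := by
  refine ha.2 ?_
  rintro _ ⟨i, rfl⟩
  obtain ⟨k, hk⟩ := h i
  exact hk.trans (hb ⟨k, rfl⟩)

theorem Monotone.directedOn_setOf_exists_le {u : ℕ → α} (hu : Monotone u) :
    DirectedOn (· ≤ ·) {c | ∃ k, c ≤ u k} := by
  rintro c ⟨k, hc⟩ d ⟨l, hd⟩
  exact ⟨u (max k l), ⟨_, le_rfl⟩, hc.trans (hu (le_max_left k l)),
    hd.trans (hu (le_max_right k l))⟩

theorem isLowerSet_setOf_exists_le {κ : Type*} (u : κ → α) : IsLowerSet {c | ∃ k, c ≤ u k} :=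
  fun _ _ hle ⟨k, hk⟩ => ⟨k, hle.trans hk⟩

theorem DirectedOn.exists_monotone_ge {S : Set α} (hS : DirectedOn (· ≤ ·) S) {f : ℕ → α}
    (hf : ∀ n, f n ∈ S) : ∃ g : ℕ → α, Monotone g ∧ ∀ n, g n ∈ S ∧ f n ≤ g n := by
  choose! ub hub hub_left hub_right using hS
  let g : ℕ → α := fun n => Nat.rec (f 0) (fun n gn => ub gn (f (n + 1))) n
  have hg : ∀ n, g n ∈ S := fun n => by
    induction n with
    | zero => exact hf 0
    | succ n ih => exact hub _ ih _ (hf _)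
  refine ⟨g, monotone_nat_of_le_succ fun n => hub_left _ (hg n) _ (hf _), fun n => ⟨hg n, ?_⟩⟩
  cases n with
  | zero => exact le_rfl
  | succ n => exact hub_right _ (hg n) _ (hf _)

theorem RieszInterpolation.directedOn_inter {S T : Set α} (h : RieszInterpolation α)
    (hS : DirectedOn (· ≤ ·) S) (hT : DirectedOn (· ≤ ·) T) (hS' : IsLowerSet S)
    (hT' : IsLowerSet T) : DirectedOn (· ≤ ·) (S ∩ T) := by
  rintro a ⟨haS, haT⟩ b ⟨hbS, hbT⟩
  obtain ⟨s, hs, has, hbs⟩ := hS a haS b hbS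
  obtain ⟨t, ht, hat, hbt⟩ := hT a haT b hbT
  obtain ⟨c, hac, hbc, hcs, hct⟩ := h a b s t has hat hbs hbt
  exact ⟨c, ⟨hS' hcs hs, hT' hct ht⟩, hac, hbc⟩

end Order

section Embedding

variable {M N : Type*} [PartialOrder M] [PartialOrder N]

theorem RieszInterpolation.of_orderEmbedding (ι : M ↪o N)
    (hher : ∀ (y : N) (x : M), y ≤ ι x → ∃ m : M, ι m = y) (hN : RieszInterpolation N) :
    RieszInterpolation M := by
  intro a₁ a₂ b₁ b₂ h₁₁ h₁₂ h₂₁ h₂₂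
  obtain ⟨C, h₁, h₂, h₃, h₄⟩ := hN (ι a₁) (ι a₂) (ι b₁) (ι b₂)
    (ι.monotone h₁₁) (ι.monotone h₁₂) (ι.monotone h₂₁) (ι.monotone h₂₂)
  obtain ⟨c, rfl⟩ := hher C b₁ h₃
  exact ⟨c, ι.le_iff_le.1 h₁, ι.le_iff_le.1 h₂, ι.le_iff_le.1 h₃, ι.le_iff_le.1 h₄⟩

theorem exists_le_of_compactlyContained_chain (ι : M ↪o N) {x u : ℕ → M} {a b : N}
    (hx : ∀ n, CompactlyContained (ι (x n)) (ι (x (n + 1))))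
    (ha : IsLUB (range fun n => ι (x n)) a) (hu : Monotone u)
    (hb : IsLUB (range fun k => ι (u k)) b) (hab : a ≤ b) (n : ℕ) : ∃ k, x n ≤ u k := by
  obtain ⟨k, hk⟩ := hx n _ (ι.monotone.comp hu) b hb ((ha.1 ⟨n + 1, rfl⟩).trans hab)
  exact ⟨k, ι.le_iff_le.1 hk⟩

theorem RieszInterpolation.map_orderEmbedding (ι : M ↪o N)
    (hsup : ∀ c : ℕ → N, Monotone c → ∃ s : N, IsLUB (Set.range c) s)
    (hdense : ∀ y : N, ∃ x : ℕ → M,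
      (∀ n, CompactlyContained (ι (x n)) (ι (x (n + 1)))) ∧
      IsLUB (Set.range fun n => ι (x n)) y)
    (hM : RieszInterpolation M) : RieszInterpolation N := by
  intro a₁ a₂ b₁ b₂ h₁₁ h₁₂ h₂₁ h₂₂
  obtain ⟨x, hx, hxa⟩ := hdense a₁
  obtain ⟨y, hy, hya⟩ := hdense a₂
  obtain ⟨u, hu, hub⟩ := hdense b₁
  obtain ⟨v, hv, hvb⟩ := hdense b₂
  have hmono : ∀ {w : ℕ → M}, (∀ n, CompactlyContained (ι (w n)) (ι (w (n + 1)))) →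
      Monotone w := fun hw _ _ hkl => ι.le_iff_le.1 (monotone_nat_of_compactlyContained_succ hw hkl)
  let S : Set M := {c | ∃ k, c ≤ u k} ∩ {c | ∃ l, c ≤ v l}
  have hS : DirectedOn (· ≤ ·) S := hM.directedOn_inter (hmono hu).directedOn_setOf_exists_le
    (hmono hv).directedOn_setOf_exists_le (isLowerSet_setOf_exists_le u)
    (isLowerSet_setOf_exists_le v)
  have hxS : ∀ n, x n ∈ S := fun n =>
    ⟨exists_le_of_compactlyContained_chain ι hx hxa (hmono hu) hub h₁₁ n,
      exists_le_of_compactlyContained_chain ι hx hxa (hmono hv) hvb h₁₂ n⟩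
  have hyS : ∀ n, y n ∈ S := fun n =>
    ⟨exists_le_of_compactlyContained_chain ι hy hya (hmono hu) hub h₂₁ n,
      exists_le_of_compactlyContained_chain ι hy hya (hmono hv) hvb h₂₂ n⟩
  choose f hfS hxf hyf using fun n => hS (x n) (hxS n) (y n) (hyS n)
  obtain ⟨c, hc, hcS⟩ := hS.exists_monotone_ge hfS
  obtain ⟨C, hC⟩ := hsup _ (ι.monotone.comp hc)
  refine ⟨C, hxa.le_of_forall_exists_le hC.1 fun n => ⟨n, ι.monotone ((hxf n).trans (hcS n).2)⟩,
    hya.le_of_forall_exists_le hC.1 fun n => ⟨n, ι.monotone ((hyf n).trans (hcS n).2)⟩,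
    hC.le_of_forall_exists_le hub.1 fun n => (hcS n).1.1.imp fun _ hk => ι.monotone hk,
    hC.le_of_forall_exists_le hvb.1 fun n => (hcS n).1.2.imp fun _ hk => ι.monotone hk⟩

end Embedding

theorem stmt11_general {M N : Type*} [PartialOrder M]
    [PartialOrder N]
    (ι : M → N)
    (hord : ∀ a b : M, a ≤ b ↔ ι a ≤ ι b)
    (hsup : ∀ c : ℕ → N, Monotone c → ∃ s : N, IsLUB (Set.range c) s)
    (hdense : ∀ y : N, ∃ x : ℕ → M,
      (∀ n, CompactlyContained (ι (x n)) (ι (x (n + 1)))) ∧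
      IsLUB (Set.range fun n => ι (x n)) y)
    (hher : ∀ (y : N) (x : M), y ≤ ι x → ∃ m : M, ι m = y) :
    RieszInterpolation M ↔ RieszInterpolation N := by
  let e : M ↪o N := OrderEmbedding.ofMapLEIff ι fun a b => (hord a b).symm
  exact ⟨RieszInterpolation.map_orderEmbedding e hsup hdense,
    RieszInterpolation.of_orderEmbedding e hher⟩

theorem stmt11 {M N : Type*} [AddCommSemigroup M] [PartialOrder M]
    [CovariantClass M M (· + ·) (· ≤ ·)]
    [AddCommSemigroup N] [PartialOrder N] [CovariantClass N N (· + ·) (· ≤ ·)]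
    (ι : M → N) (hadd : ∀ a b : M, ι (a + b) = ι a + ι b)
    (hord : ∀ a b : M, a ≤ b ↔ ι a ≤ ι b)
    (hsup : ∀ c : ℕ → N, Monotone c → ∃ s : N, IsLUB (Set.range c) s)
    (hdense : ∀ y : N, ∃ x : ℕ → M,
      (∀ n, CompactlyContained (ι (x n)) (ι (x (n + 1)))) ∧
      IsLUB (Set.range fun n => ι (x n)) y)
    (hher : ∀ (y : N) (x : M), y ≤ ι x → ∃ m : M, ι m = y) :
    RieszInterpolation M ↔ RieszInterpolation N :=
  stmt11_general ι hord hsup hdense hher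
end
end

section
/- Let X be a compact Hausdorff space and A a unital C*-algebra. The map sending a pair (x, τ_A) ∈ X × ∂ₑT(A) to the functional τ on C(X,A) defined by τ(f) = τ_A(f(x)) is a homeomorphism from X × ∂ₑT(A) onto ∂ₑT(C(X,A)), where trace spaces carry the weak-* topology. -/
/-!
A tracial state `τ` of `C(X, A)` restricts to a positive functional `g ↦ τ (g • 1)` on the
central copy of `C(X)`. When `τ` is extreme, writing `τ = τ (g • ·) + τ ((1 - g) • ·)` for
`0 ≤ g ≤ 1` forces `τ (g • f) = τ (g • 1) * τ f`, so the restriction is a character of `C(X)`,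
i.e. evaluation at a point `x`. By Cauchy–Schwarz `τ` then kills `g • f` whenever `g x = 0`, and
`f - f x` is uniformly approximated by such products, so `τ f = τ (const (f x))`: the trace is
`τ_A ∘ ev_x` with `τ_A = τ ∘ const`. The same localisation shows that `τ_A ∘ ev_x` is extreme
when `τ_A` is. The inverse map is continuous because the character space of `C(X)` carries the
weak-* topology, and the forward map because tracial states have norm one.
-/

noncomputable section

set_option maxHeartbeats 1000000

open scoped ComplexOrder

/-- The set of tracial states of a unital C*-algebra, as a subset of the weak-* dual. -/
def TracialStates (A : Type*) [CStarAlgebra A] : Set (WeakDual ℂ A) :=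
  {τ | τ 1 = 1 ∧ (∀ a : A, 0 ≤ τ (star a * a)) ∧ ∀ a b : A, τ (a * b) = τ (b * a)}

namespace WeakDual

section Apply

variable {E : Type*} [AddCommMonoid E] [Module ℂ E] [TopologicalSpace E]

@[simp] lemma zero_apply (a : E) : (0 : WeakDual ℂ E) a = 0 := rfl

@[simp] lemma add_apply (σ ρ : WeakDual ℂ E) (a : E) : (σ + ρ) a = σ a + ρ a := rfl

@[simp] lemma smul_apply (t : ℝ) (σ : WeakDual ℂ E) (a : E) : (t • σ) a = t • σ a := rfl

end Apply

variable {B : Type*} [CStarAlgebra B]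

def compMulLeft (σ : WeakDual ℂ B) (c : B) : WeakDual ℂ B :=
  ContinuousLinearMap.comp σ (ContinuousLinearMap.mul ℂ B c)

@[simp] lemma compMulLeft_apply (σ : WeakDual ℂ B) (c a : B) : σ.compMulLeft c a = σ (c * a) :=
  rfl

end WeakDual

section PositiveFunctional

variable {B : Type*} [NonUnitalCStarAlgebra B] {σ : WeakDual ℂ B}

/- A C⋆-algebra carries no order instance; under the spectral order `σ` becomes a positive
linear map, which gives access to the GNS inner product `⟪a, b⟫ = σ (star a * b)`. -/
lemma map_nonneg_of_spectralOrder (hσ : ∀ a : B, 0 ≤ σ (star a * a)) :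
    letI := CStarAlgebra.spectralOrder B
    ∀ x : B, 0 ≤ x → 0 ≤ σ x := by
  let := CStarAlgebra.spectralOrder B
  let := CStarAlgebra.spectralOrderedRing B
  intro x hx
  obtain ⟨c, rfl⟩ := CStarAlgebra.nonneg_iff_eq_star_mul_self.mp hx
  exact hσ c

lemma norm_apply_star_mul_sq_le (hσ : ∀ a : B, 0 ≤ σ (star a * a)) (a b : B) :
    ‖σ (star a * b)‖ ^ 2 ≤ ‖σ (star a * a)‖ * ‖σ (star b * b)‖ := by
  let := CStarAlgebra.spectralOrder B
  let := CStarAlgebra.spectralOrderedRing B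
  let f := PositiveLinearMap.mk₀ σ.toLinearMap (map_nonneg_of_spectralOrder hσ)
  have hnorm (c : B) : ‖f.toPreGNS c‖ ^ 2 = ‖σ (star c * c)‖ := by
    have := congrArg norm (f.preGNS_norm_sq (f.toPreGNS c))
    simp only [Complex.norm_pow, Complex.norm_real, norm_norm] at this
    exact this
  have := pow_le_pow_left₀ (norm_nonneg _)
    (norm_inner_le_norm (𝕜 := ℂ) (f.toPreGNS a) (f.toPreGNS b)) 2
  rwa [mul_pow, hnorm, hnorm] at this

lemma apply_star_mul_eq_zero (hσ : ∀ a : B, 0 ≤ σ (star a * a)) {a : B}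
    (ha : σ (star a * a) = 0) (b : B) : σ (star a * b) = 0 := by
  have := norm_apply_star_mul_sq_le hσ a b
  rw [ha, norm_zero, zero_mul] at this
  exact norm_eq_zero.mp (pow_eq_zero_iff two_ne_zero |>.mp (le_antisymm this (by positivity)))

end PositiveFunctional

section State

variable {B : Type*} [CStarAlgebra B] {σ : WeakDual ℂ B}

lemma norm_apply_star_mul_self_le (hσ : ∀ a : B, 0 ≤ σ (star a * a)) (a : B) :
    ‖σ (star a * a)‖ ≤ ‖σ 1‖ * ‖a‖ ^ 2 := by
  let := CStarAlgebra.spectralOrder B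
  let := CStarAlgebra.spectralOrderedRing B
  let f := PositiveLinearMap.mk₀ σ.toLinearMap (map_nonneg_of_spectralOrder hσ)
  have := f.norm_apply_le_of_nonneg (star a * a) (star_mul_self_nonneg a)
  rwa [CStarRing.norm_star_mul_self, ← sq] at this

lemma norm_apply_le_of_mem_tracialStates (hσ : σ ∈ TracialStates B) (a : B) : ‖σ a‖ ≤ ‖a‖ := by
  obtain ⟨h1, hpos, -⟩ := hσ
  have hcs := norm_apply_star_mul_sq_le hpos 1 a
  rw [star_one, one_mul, one_mul, h1, norm_one, one_mul] at hcs
  have hnorm := norm_apply_star_mul_self_le hpos a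
  rw [h1, norm_one, one_mul] at hnorm
  exact (pow_le_pow_iff_left₀ (norm_nonneg _) (norm_nonneg _) two_ne_zero).mp (hcs.trans hnorm)

end State

section Trace

variable {B : Type*} [CStarAlgebra B]

def IsPositiveTrace (σ : WeakDual ℂ B) : Prop :=
  (∀ a : B, 0 ≤ σ (star a * a)) ∧ ∀ a b : B, σ (a * b) = σ (b * a)

namespace IsPositiveTrace

variable {σ : WeakDual ℂ B}

lemma smul (hσ : IsPositiveTrace σ) {t : ℝ} (ht : 0 ≤ t) : IsPositiveTrace (t • σ) := by
  refine ⟨fun a => ?_, fun a b => ?_⟩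
  · simpa only [WeakDual.smul_apply, Complex.real_smul] using
      mul_nonneg (Complex.zero_le_real.mpr ht) (hσ.1 a)
  · simp only [WeakDual.smul_apply, hσ.2 a b]

lemma apply_one_eq_re (hσ : IsPositiveTrace σ) : σ 1 = (σ 1).re :=
  Complex.eq_re_of_ofReal_le (r := 0) (by simpa using hσ.1 1)

lemma re_apply_one_nonneg (hσ : IsPositiveTrace σ) : 0 ≤ (σ 1).re := by
  simpa using (Complex.le_def.mp (hσ.1 1)).1

lemma eq_zero_of_apply_one (hσ : IsPositiveTrace σ) (h1 : σ 1 = 0) : σ = 0 := by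
  refine DFunLike.ext _ _ fun a => ?_
  simpa using apply_star_mul_eq_zero hσ.1 (a := 1) (by simpa using h1) a

lemma inv_smul_mem_tracialStates (hσ : IsPositiveTrace σ) (h1 : σ 1 ≠ 0) :
    (σ 1).re⁻¹ • σ ∈ TracialStates B := by
  refine ⟨?_, hσ.smul (inv_nonneg.mpr hσ.re_apply_one_nonneg)⟩
  rw [WeakDual.smul_apply, Complex.real_smul, Complex.ofReal_inv, ← hσ.apply_one_eq_re]
  exact inv_mul_cancel₀ h1

lemma compMulLeft_star_mul_self (hσ : IsPositiveTrace σ) {z : B} (hz : ∀ b, Commute z b) :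
    IsPositiveTrace (σ.compMulLeft (star z * z)) := by
  have hc (b : B) : Commute (star z * z) b :=
    .mul_left (by simpa using (hz (star b)).star_star) (hz b)
  refine ⟨fun a => ?_, fun a b => ?_⟩
  · have : star z * z * (star a * a) = star (z * a) * (z * a) := by
      rw [star_mul, ← mul_assoc, (hc (star a)).eq, mul_assoc, mul_assoc, mul_assoc]
    simpa [this] using hσ.1 (z * a)
  · simp only [WeakDual.compMulLeft_apply]
    rw [← mul_assoc, hσ.2, ← mul_assoc, ← (hc b).eq, mul_assoc]

end IsPositiveTrace

theorem apply_eq_mul_of_add_eq_of_mem_extremePoints {τ : WeakDual ℂ B}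
    (hτ : τ ∈ Set.extremePoints ℝ (TracialStates B)) {σ ρ : WeakDual ℂ B}
    (hσ : IsPositiveTrace σ) (hρ : IsPositiveTrace ρ) (h : σ + ρ = τ) (a : B) :
    σ a = σ 1 * τ a := by
  by_cases hσ1 : σ 1 = 0
  · simp [hσ.eq_zero_of_apply_one hσ1]
  by_cases hρ1 : ρ 1 = 0
  · rw [hρ.eq_zero_of_apply_one hρ1, add_zero] at h
    rw [h, hτ.1.1, one_mul]
  have hs : 0 < (σ 1).re := hσ.re_apply_one_nonneg.lt_of_ne' fun h0 => hσ1 (by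
    rw [hσ.apply_one_eq_re, h0, Complex.ofReal_zero])
  have ht : 0 < (ρ 1).re := hρ.re_apply_one_nonneg.lt_of_ne' fun h0 => hρ1 (by
    rw [hρ.apply_one_eq_re, h0, Complex.ofReal_zero])
  have hst : (σ 1).re + (ρ 1).re = 1 := by
    simpa [hτ.1.1] using congrArg (fun φ : WeakDual ℂ B => (φ 1).re) h
  have hseg : τ ∈ openSegment ℝ ((σ 1).re⁻¹ • σ) ((ρ 1).re⁻¹ • ρ) :=
    ⟨_, _, hs, ht, hst, by
      rw [← h]
      exact DFunLike.ext _ _ fun b => by simp [hs.ne', ht.ne']⟩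
  have hστ := hτ.2 (hσ.inv_smul_mem_tracialStates hσ1) (hρ.inv_smul_mem_tracialStates hρ1) hseg
  rw [← hστ, WeakDual.smul_apply, Complex.real_smul, Complex.ofReal_inv, ← mul_assoc,
    ← hσ.apply_one_eq_re, mul_inv_cancel₀ hσ1, one_mul]

theorem apply_star_mul_self_mul_of_mem_extremePoints {τ : WeakDual ℂ B}
    (hτ : τ ∈ Set.extremePoints ℝ (TracialStates B)) {z w : B} (hz : ∀ b, Commute z b)
    (hw : ∀ b, Commute w b) (hzw : star z * z + star w * w = 1) (a : B) :
    τ (star z * z * a) = τ (star z * z) * τ a := by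
  have h := apply_eq_mul_of_add_eq_of_mem_extremePoints hτ
    (IsPositiveTrace.compMulLeft_star_mul_self hτ.1.2 hz)
    (IsPositiveTrace.compMulLeft_star_mul_self hτ.1.2 hw)
    (DFunLike.ext _ _ fun b => by simp [← map_add, ← add_mul, hzw]) a
  simpa using h

end Trace

section ContinuousMap

open Filter Topology

variable {X : Type*} [TopologicalSpace X] {A : Type*} [CStarAlgebra A]

variable (A) in
def scalarStarAlgHom : C(X, ℂ) →⋆ₐ[ℂ] C(X, A) :=
  ContinuousMap.compStarAlgHom X (StarAlgHom.ofId ℂ A) (continuous_algebraMap ℂ A)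

@[simp] lemma scalarStarAlgHom_apply (g : C(X, ℂ)) (y : X) :
    scalarStarAlgHom A g y = algebraMap ℂ A (g y) :=
  rfl

lemma commute_scalarStarAlgHom (g : C(X, ℂ)) (f : C(X, A)) :
    Commute (scalarStarAlgHom A g) f :=
  ContinuousMap.ext fun y => Algebra.commutes (g y) (f y)

def compEval (x : X) (σ : WeakDual ℂ A) : WeakDual ℂ C(X, A) :=
  ContinuousLinearMap.comp σ (ContinuousMap.evalCLM ℂ x)

@[simp] lemma compEval_apply (x : X) (σ : WeakDual ℂ A) (f : C(X, A)) :
    compEval x σ f = σ (f x) :=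
  rfl

variable (X A) in
def constCLM : A →L[ℂ] C(X, A) where
  toFun := ContinuousMap.const X
  map_add' _ _ := rfl
  map_smul' _ _ := rfl
  cont := ContinuousMap.continuous_const'

def compConst (τ : WeakDual ℂ C(X, A)) : WeakDual ℂ A :=
  ContinuousLinearMap.comp τ (constCLM X A)

@[simp] lemma compConst_apply (τ : WeakDual ℂ C(X, A)) (a : A) :
    compConst τ a = τ (ContinuousMap.const X a) :=
  rfl

lemma compConst_compEval (x : X) (σ : WeakDual ℂ A) : compConst (compEval x σ) = σ :=
  rfl

lemma continuous_compConst : Continuous (compConst : WeakDual ℂ C(X, A) → WeakDual ℂ A) :=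
  WeakDual.continuous_of_continuous_eval fun _ => WeakDual.eval_continuous _

lemma continuous_compEval :
    Continuous fun p : X × TracialStates A => compEval p.1 (p.2 : WeakDual ℂ A) := by
  refine WeakDual.continuous_of_continuous_eval fun f => continuous_iff_continuousAt.mpr ?_
  rintro ⟨x₀, σ₀⟩
  have hsmall : Tendsto (fun p : X × TracialStates A => (p.2 : WeakDual ℂ A) (f p.1 - f x₀))
      (𝓝 (x₀, σ₀)) (𝓝 0) := by
    refine squeeze_zero_norm (fun p => norm_apply_le_of_mem_tracialStates p.2.2 _) ?_
    simpa using (((map_continuous f).comp continuous_fst).sub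
      (continuous_const (y := f x₀))).norm.tendsto (x₀, σ₀)
  have hfixed : Tendsto (fun p : X × TracialStates A => (p.2 : WeakDual ℂ A) (f x₀))
      (𝓝 (x₀, σ₀)) (𝓝 ((σ₀ : WeakDual ℂ A) (f x₀))) :=
    ((WeakDual.eval_continuous (f x₀)).comp (continuous_subtype_val.comp continuous_snd)).tendsto _
  have := hsmall.add hfixed
  simp only [map_sub, sub_add_cancel, zero_add] at this
  exact this

variable [CompactSpace X]

lemma compEval_mem_tracialStates (x : X) {σ : WeakDual ℂ A} (hσ : σ ∈ TracialStates A) :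
    compEval x σ ∈ TracialStates C(X, A) :=
  ⟨hσ.1, fun f => hσ.2.1 (f x), fun f g => hσ.2.2 (f x) (g x)⟩

lemma compConst_mem_tracialStates {τ : WeakDual ℂ C(X, A)} (hτ : τ ∈ TracialStates C(X, A)) :
    compConst τ ∈ TracialStates A :=
  ⟨hτ.1, fun a => hτ.2.1 (.const X a), fun a b => hτ.2.2 (.const X a) (.const X b)⟩

lemma apply_scalarStarAlgHom_nonneg {σ : WeakDual ℂ C(X, A)}
    (hσ : ∀ a, 0 ≤ σ (star a * a)) {g : C(X, ℂ)} (hg : 0 ≤ g) :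
    0 ≤ σ (scalarStarAlgHom A g) := by
  obtain ⟨u, rfl⟩ := CStarAlgebra.nonneg_iff_eq_star_mul_self.mp hg
  rw [map_mul, map_star]
  exact hσ _

theorem apply_scalarStarAlgHom_mul_of_mem_extremePoints {τ : WeakDual ℂ C(X, A)}
    (hτ : τ ∈ Set.extremePoints ℝ (TracialStates C(X, A))) (g : C(X, ℂ)) (f : C(X, A)) :
    τ (scalarStarAlgHom A g * f) = τ (scalarStarAlgHom A g) * τ f := by
  let S : Submodule ℂ C(X, ℂ) :=
    { carrier := {g | ∀ f, τ (scalarStarAlgHom A g * f) = τ (scalarStarAlgHom A g) * τ f}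
      add_mem' := fun hg hh f => by simp [add_mul, hg f, hh f]
      zero_mem' := fun f => by simp
      smul_mem' := fun c g hg f => by simp [hg f, mul_assoc] }
  suffices S = ⊤ from (this ▸ Submodule.mem_top : g ∈ S) f
  -- nonnegative contractions span `C(X, ℂ)`, and for those both `g` and `1 - g` are squares
  rw [eq_top_iff, ← CStarAlgebra.span_nonneg_inter_unitClosedBall, Submodule.span_le]
  rintro g ⟨hg0 : 0 ≤ g, hg1⟩
  have hg1 : g ≤ 1 := (CStarAlgebra.norm_le_one_iff_of_nonneg g hg0).mp (by simpa using hg1)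
  obtain ⟨u, rfl⟩ := CStarAlgebra.nonneg_iff_eq_star_mul_self.mp hg0
  obtain ⟨v, hv⟩ := CStarAlgebra.nonneg_iff_eq_star_mul_self.mp (sub_nonneg.mpr hg1)
  have hsum : star (scalarStarAlgHom A u) * scalarStarAlgHom A u
      + star (scalarStarAlgHom A v) * scalarStarAlgHom A v = 1 := by
    simp only [← map_star, ← map_mul, ← map_add, ← hv, add_sub_cancel, map_one]
  intro f
  simpa [map_star] using apply_star_mul_self_mul_of_mem_extremePoints hτ
    (commute_scalarStarAlgHom u) (commute_scalarStarAlgHom v) hsum f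

def characterOfMemExtremePoints {τ : WeakDual ℂ C(X, A)}
    (hτ : τ ∈ Set.extremePoints ℝ (TracialStates C(X, A))) : C(X, ℂ) →ₐ[ℂ] ℂ :=
  AlgHom.ofLinearMap ((τ : C(X, A) →L[ℂ] ℂ).toLinearMap ∘ₗ (scalarStarAlgHom A).toLinearMap)
    (show τ (scalarStarAlgHom A 1) = 1 by rw [map_one]; exact hτ.1.1)
    (fun g h => show τ (scalarStarAlgHom A (g * h)) = _ by
      rw [map_mul]; exact apply_scalarStarAlgHom_mul_of_mem_extremePoints hτ g _)

lemma exists_scalar_norm_mul_le {f : C(X, A)} {x : X} (hfx : f x = 0) {ε : ℝ} (hε : 0 < ε) :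
    ∃ g : C(X, ℂ), g x = 1 ∧ 0 ≤ 1 - g ∧ ‖scalarStarAlgHom A g * f‖ ≤ ε := by
  have hden (y : X) : 0 < ε + ‖f y‖ := by positivity
  refine ⟨⟨fun y => ((ε / (ε + ‖f y‖) : ℝ) : ℂ), Complex.continuous_ofReal.comp <|
    continuous_const.div (by fun_prop) fun y => (hden y).ne'⟩, ?_, ?_, ?_⟩
  · simp [hfx, hε.ne']
  · refine ContinuousMap.le_def.mpr fun y => ?_
    show (0 : ℂ) ≤ 1 - ((ε / (ε + ‖f y‖) : ℝ) : ℂ)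
    exact sub_nonneg.mpr <| by
      exact_mod_cast div_le_one_of_le₀ (le_add_of_nonneg_right (norm_nonneg (f y))) (hden y).le
  · refine (ContinuousMap.norm_le _ hε.le).mpr fun y => ?_
    rw [ContinuousMap.mul_apply, scalarStarAlgHom_apply, ← Algebra.smul_def, norm_smul,
      ContinuousMap.coe_mk, Complex.norm_real, Real.norm_of_nonneg (by positivity),
      div_mul_eq_mul_div, div_le_iff₀ (hden y)]
    nlinarith

theorem apply_eq_apply_const_of_apply_scalar_eq_zero {σ : WeakDual ℂ C(X, A)}
    (hσ : σ ∈ TracialStates C(X, A)) {x : X}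
    (hx : ∀ g : C(X, ℂ), 0 ≤ g → g x = 0 → σ (scalarStarAlgHom A g) = 0)
    (f : C(X, A)) : σ f = σ (ContinuousMap.const X (f x)) := by
  have hkill (g : C(X, ℂ)) (hg : 0 ≤ g) (hgx : g x = 0) (f : C(X, A)) :
      σ (scalarStarAlgHom A g * f) = 0 := by
    obtain ⟨u, rfl⟩ := CStarAlgebra.nonneg_iff_eq_star_mul_self.mp hg
    have hu : σ (star (scalarStarAlgHom A u) * scalarStarAlgHom A u) = 0 := by
      simpa [map_star] using hx _ hg hgx
    simpa [map_star, mul_assoc] using apply_star_mul_eq_zero hσ.2.1 hu (scalarStarAlgHom A u * f)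
  suffices ∀ f : C(X, A), f x = 0 → σ f = 0 by
    simpa [sub_eq_zero] using this (f - ContinuousMap.const X (f x)) (by simp)
  intro f hfx
  refine norm_le_zero_iff.mp (le_of_forall_pos_le_add fun ε hε => ?_)
  obtain ⟨g, hgx, hg1, hgf⟩ := exists_scalar_norm_mul_le hfx hε
  have : σ f = σ (scalarStarAlgHom A g * f) := by
    simpa [sub_mul, sub_eq_zero] using hkill (1 - g) hg1 (by simp [hgx]) f
  rw [zero_add, this]
  exact (norm_apply_le_of_mem_tracialStates hσ _).trans hgf

theorem compEval_mem_extremePoints (x : X) {σ : WeakDual ℂ A}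
    (hσ : σ ∈ Set.extremePoints ℝ (TracialStates A)) :
    compEval x σ ∈ Set.extremePoints ℝ (TracialStates C(X, A)) := by
  refine ⟨compEval_mem_tracialStates x hσ.1, fun σ₁ h₁ σ₂ h₂ ⟨a, b, ha, hb, hab, hcomb⟩ => ?_⟩
  have hcomb' (f : C(X, A)) : a • σ₁ f + b • σ₂ f = σ (f x) := congrArg (· f) hcomb
  have hvan (g : C(X, ℂ)) (hg : 0 ≤ g) (hgx : g x = 0) : σ₁ (scalarStarAlgHom A g) = 0 := by
    have h := hcomb' (scalarStarAlgHom A g)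
    rw [scalarStarAlgHom_apply, hgx, map_zero, map_zero, Complex.real_smul,
      Complex.real_smul] at h
    have h₁g := mul_nonneg (Complex.zero_le_real.mpr ha.le)
      (apply_scalarStarAlgHom_nonneg h₁.2.1 hg)
    have h₂g := mul_nonneg (Complex.zero_le_real.mpr hb.le)
      (apply_scalarStarAlgHom_nonneg h₂.2.1 hg)
    exact (mul_eq_zero.mp ((add_eq_zero_iff_of_nonneg h₁g h₂g).mp h).1).resolve_left
      (Complex.ofReal_ne_zero.mpr ha.ne')
  have hσ₁ : σ₁ = compEval x (compConst σ₁) :=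
    DFunLike.ext _ _ (apply_eq_apply_const_of_apply_scalar_eq_zero h₁ hvan)
  have hρ₁ : compConst σ₁ = σ :=
    hσ.2 (compConst_mem_tracialStates h₁) (compConst_mem_tracialStates h₂)
      ⟨a, b, ha, hb, hab, DFunLike.ext _ _ fun c => by simpa using hcomb' (.const X c)⟩
  rw [hσ₁, hρ₁]

variable [T2Space X]

def supportPoint (τ : Set.extremePoints ℝ (TracialStates C(X, A))) : X :=
  (WeakDual.CharacterSpace.homeoEval X ℂ).symm
    (WeakDual.CharacterSpace.equivAlgHom.symm (characterOfMemExtremePoints τ.2))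

lemma apply_scalarStarAlgHom_eq_supportPoint (τ : Set.extremePoints ℝ (TracialStates C(X, A)))
    (g : C(X, ℂ)) : (τ : WeakDual ℂ C(X, A)) (scalarStarAlgHom A g) = g (supportPoint τ) := by
  have := (WeakDual.CharacterSpace.homeoEval X ℂ).apply_symm_apply
    (WeakDual.CharacterSpace.equivAlgHom.symm (characterOfMemExtremePoints τ.2))
  exact (congrArg (fun χ : WeakDual.characterSpace ℂ C(X, ℂ) => χ g) this).symm

lemma supportPoint_eq_of_forall (τ : Set.extremePoints ℝ (TracialStates C(X, A))) {x : X}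
    (hx : ∀ g : C(X, ℂ), (τ : WeakDual ℂ C(X, A)) (scalarStarAlgHom A g) = g x) :
    supportPoint τ = x :=
  (WeakDual.CharacterSpace.homeoEval X ℂ).symm_apply_eq.mpr <| DFunLike.ext _ _ fun g => hx g

lemma continuous_supportPoint :
    Continuous (supportPoint : Set.extremePoints ℝ (TracialStates C(X, A)) → X) :=
  (WeakDual.CharacterSpace.homeoEval X ℂ).symm.continuous.comp <|
    .subtype_mk (WeakDual.continuous_of_continuous_eval fun g =>
      (WeakDual.eval_continuous (scalarStarAlgHom A g)).comp continuous_subtype_val) _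

lemma compEval_supportPoint_compConst (τ : Set.extremePoints ℝ (TracialStates C(X, A))) :
    compEval (supportPoint τ) (compConst τ.1) = τ :=
  DFunLike.ext _ _ fun f => (apply_eq_apply_const_of_apply_scalar_eq_zero τ.2.1
    (fun g _ hgx => by rw [apply_scalarStarAlgHom_eq_supportPoint, hgx]) f).symm

lemma supportPoint_compEval (x : X) (σ : Set.extremePoints ℝ (TracialStates A)) :
    supportPoint ⟨compEval x σ.1, compEval_mem_extremePoints x σ.2⟩ = x :=
  supportPoint_eq_of_forall _ fun g => by
    simp [Algebra.algebraMap_eq_smul_one, σ.2.1.1]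

theorem compConst_mem_extremePoints (τ : Set.extremePoints ℝ (TracialStates C(X, A))) :
    compConst τ.1 ∈ Set.extremePoints ℝ (TracialStates A) := by
  refine ⟨compConst_mem_tracialStates τ.2.1, fun ρ₁ h₁ ρ₂ h₂ ⟨a, b, ha, hb, hab, hcomb⟩ => ?_⟩
  have : compEval (supportPoint τ) ρ₁ = τ :=
    τ.2.2 (compEval_mem_tracialStates _ h₁) (compEval_mem_tracialStates (supportPoint τ) h₂)
      ⟨a, b, ha, hb, hab, by
        rw [← compEval_supportPoint_compConst τ, ← hcomb]
        exact DFunLike.ext _ _ fun f => by simp⟩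
  rw [← this, compConst_compEval]

end ContinuousMap

theorem stmt17 (X : Type*) [TopologicalSpace X] [CompactSpace X] [T2Space X]
    (A : Type*) [CStarAlgebra A] :
    ∃ e : (X × (Set.extremePoints ℝ (TracialStates A))) ≃ₜ
        (Set.extremePoints ℝ (TracialStates C(X, A))),
      ∀ (x : X) (τA : Set.extremePoints ℝ (TracialStates A)) (f : C(X, A)),
        (e (x, τA) : WeakDual ℂ C(X, A)) f = (τA : WeakDual ℂ A) (f x) :=
  ⟨{ toFun p := ⟨compEval p.1 p.2.1, compEval_mem_extremePoints p.1 p.2.2⟩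
     invFun τ := (supportPoint τ, ⟨compConst τ.1, compConst_mem_extremePoints τ⟩)
     left_inv p := Prod.ext (supportPoint_compEval p.1 p.2) rfl
     right_inv τ := Subtype.ext (compEval_supportPoint_compConst τ)
     continuous_toFun := .subtype_mk (continuous_compEval.comp <| continuous_fst.prodMk <|
       (continuous_inclusion extremePoints_subset).comp continuous_snd) _
     continuous_invFun := continuous_supportPoint.prodMk <|
       .subtype_mk (continuous_compConst.comp continuous_subtype_val) _ },
    fun _ _ _ => rfl⟩
end
end
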